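/- Let V ⊆ ℝ^d be open, K ⊆ V compact, let w₁, …, w_s be real numbers, and let g₁, …, g_s : ℝ × V → ℝ be smooth functions such that on (0, ∞) × V one has ∂g_i/∂x₁ = w_i g_i and g_i > 0 for every i. Then every iterated partial derivative of positive order of the function log(Σᵢ g_i) is bounded on (0, ∞) × K. -/

import Mathlib

open Set

private lemma clm_iteratedFDeriv_norm_le {E F : Type*} [NormedAddCommGroup E] [NormedSpace ℝ E]
    [NormedAddCommGroup F] [NormedSpace ℝ F] (ℓ : E →L[ℝ] F) {m : ℕ} (hm : 1 ≤ m) (x : E) :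
    ‖iteratedFDeriv ℝ m (⇑ℓ) x‖ ≤ ‖ℓ‖ := by
  match m, hm with
  | 1, _ =>
    rw [show (1:ℕ) = 0 + 1 from rfl, ← norm_iteratedFDeriv_fderiv, norm_iteratedFDeriv_zero]
    have : fderiv ℝ (⇑ℓ) x = ℓ := ℓ.fderiv
    rw [this]
  | (k+2), _ =>
    rw [show k + 2 = (k+1) + 1 from rfl, ← norm_iteratedFDeriv_fderiv]
    have : (fderiv ℝ (⇑ℓ)) = fun _ : E => ℓ := funext fun y => ℓ.fderiv
    rw [this, iteratedFDeriv_const_of_ne (by omega)]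
    simpa using norm_nonneg ℓ

private lemma inv_iteratedDeriv_norm (n : ℕ) {x : ℝ} (hx : 0 < x) :
    ‖iteratedDeriv n (Inv.inv : ℝ → ℝ) x‖ = n.factorial * (x⁻¹)^(n+1) := by
  have h : (Inv.inv : ℝ → ℝ) = fun y : ℝ => y ^ (-1:ℤ) := by
    funext y; rw [zpow_neg_one]
  rw [h, iteratedDeriv_eq_iterate, iter_deriv_zpow]
  rw [Real.norm_eq_abs, abs_mul]
  congr 1
  · rw [Finset.abs_prod]
    have : ∀ i ∈ Finset.range n, |(-1:ℝ) - (i:ℝ)| = ((i:ℝ) + 1) := by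
      intro i _
      rw [show (-1:ℝ) - i = -((i:ℝ)+1) by ring, abs_neg, abs_of_pos (by positivity)]
    calc ∏ i ∈ Finset.range n, |((-1:ℤ):ℝ) - (i:ℝ)|
        = ∏ i ∈ Finset.range n, ((i:ℝ) + 1) := by
          refine Finset.prod_congr rfl fun i hi => ?_
          push_cast
          exact this i hi
      _ = ((n.factorial : ℕ) : ℝ) := by
          norm_cast
          exact Finset.prod_range_add_one_eq_factorial n
  · rw [show (-1 - (n:ℤ)) = -(((n+1:ℕ)):ℤ) by push_cast; ring, zpow_neg, zpow_natCast, abs_inv,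
      abs_of_pos (by positivity)]
    simp [inv_pow]

private lemma log_iteratedDeriv_norm (n : ℕ) {x : ℝ} (hx : 0 < x) :
    ‖iteratedDeriv (n+1) Real.log x‖ = n.factorial * (x⁻¹)^(n+1) := by
  rw [iteratedDeriv_succ', Real.deriv_log']
  exact inv_iteratedDeriv_norm n hx

private lemma exp_comp_fst_norm_le {E : Type*} [NormedAddCommGroup E] [NormedSpace ℝ E]
    (b : ℝ) (hb : b ≤ 0) (k : ℕ) (p : ℝ × E) (hp : 0 ≤ p.1) :
    ‖iteratedFDeriv ℝ k (fun q : ℝ × E => Real.exp (b * q.1)) p‖ ≤ |b|^k := by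
  have hu : ContDiff ℝ (⊤ : ℕ∞) (fun t : ℝ => Real.exp (b * t)) :=
    Real.contDiff_exp.comp (contDiff_const.mul contDiff_id)
  have hcomp : (fun q : ℝ × E => Real.exp (b * q.1)) =
      (fun t : ℝ => Real.exp (b * t)) ∘ (ContinuousLinearMap.fst ℝ ℝ E) := rfl
  rw [hcomp, ContinuousLinearMap.iteratedFDeriv_comp_right _ hu p ((by exact_mod_cast le_top))]
  calc ‖(iteratedFDeriv ℝ k (fun t : ℝ => Real.exp (b * t)) ((ContinuousLinearMap.fst ℝ ℝ E) p)).compContinuousLinearMap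
        (fun _ => ContinuousLinearMap.fst ℝ ℝ E)‖
      ≤ ‖iteratedFDeriv ℝ k (fun t : ℝ => Real.exp (b * t)) p.1‖ *
        ∏ _i : Fin k, ‖ContinuousLinearMap.fst ℝ ℝ E‖ :=
        ContinuousMultilinearMap.norm_compContinuousLinearMap_le _ _
    _ ≤ |b|^k * 1 := by
        apply mul_le_mul _ _ (by positivity) (by positivity)
        · rw [norm_iteratedFDeriv_eq_norm_iteratedDeriv, iteratedDeriv_exp_const_mul]
          rw [Real.norm_eq_abs, abs_mul, Real.abs_exp, abs_pow]
          calc |b|^k * Real.exp (b * p.1) ≤ |b|^k * 1 := by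
                apply mul_le_mul_of_nonneg_left _ (by positivity)
                exact Real.exp_le_one_iff.mpr (mul_nonpos_of_nonpos_of_nonneg hb hp)
            _ = |b|^k := mul_one _
        · exact Finset.prod_le_one (fun _ _ => norm_nonneg _)
            (fun _ _ => ContinuousLinearMap.norm_fst_le _ _ _)
    _ = |b|^k := mul_one _

private lemma ode_decomp {d : ℕ} {V : Set (Fin d → ℝ)} (hV : IsOpen V)
    {gj : (ℝ × (Fin d → ℝ)) → ℝ} {wj : ℝ}
    (hg : ContDiffOn ℝ (⊤ : ℕ∞) gj ((univ : Set ℝ) ×ˢ V))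
    (hgw : ∀ p ∈ (Ioi (0:ℝ)) ×ˢ V, fderiv ℝ gj p (1, 0) = wj * gj p)
    {x : ℝ} (hx : 0 < x) {v : Fin d → ℝ} (hv : v ∈ V) :
    gj (x, v) = Real.exp (wj * x) * (Real.exp (-wj) * gj (1, v)) := by
  set φ : ℝ → ℝ := fun t => Real.exp (-wj * t) * gj (t, v) with hφ
  have hd : ∀ t ∈ Ioi (0:ℝ), HasDerivAt φ 0 t := by
    intro t ht
    have hopen : IsOpen ((univ : Set ℝ) ×ˢ V) := isOpen_univ.prod hV
    have hmem : (t, v) ∈ (univ : Set ℝ) ×ˢ V := ⟨mem_univ _, hv⟩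
    have hdiff : DifferentiableAt ℝ gj (t, v) :=
      (hg.contDiffAt (hopen.mem_nhds hmem)).differentiableAt (by simp)
    have hcurve : HasDerivAt (fun t : ℝ => ((t : ℝ), v)) (1, (0 : Fin d → ℝ)) t :=
      (hasDerivAt_id t).prodMk (hasDerivAt_const t v)
    have h1 : HasDerivAt (fun t : ℝ => gj (t, v)) (fderiv ℝ gj (t, v) (1, 0)) t :=
      hdiff.hasFDerivAt.comp_hasDerivAt t hcurve
    rw [hgw (t, v) ⟨ht, hv⟩] at h1
    have h2 : HasDerivAt (fun t : ℝ => Real.exp (-wj * t)) (Real.exp (-wj * t) * (-wj * 1)) t :=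
      (HasDerivAt.const_mul (-wj) (hasDerivAt_id t)).exp
    have h3 := h2.mul h1
    refine h3.congr_deriv ?_
    ring
  have hdiffOn : DifferentiableOn ℝ φ (Ioi (0:ℝ)) :=
    fun t ht => ((hd t ht).differentiableAt).differentiableWithinAt
  have hzero : ∀ t ∈ Ioi (0:ℝ), fderivWithin ℝ φ (Ioi (0:ℝ)) t = 0 := by
    intro t ht
    rw [fderivWithin_of_isOpen isOpen_Ioi ht, (hd t ht).hasFDerivAt.fderiv]
    ext y
    simp
  have hconst : φ x = φ 1 :=
    (convex_Ioi (0:ℝ)).is_const_of_fderivWithin_eq_zero hdiffOn hzero hx (mem_Ioi.mpr one_pos)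
  have h4 : Real.exp (wj * x) * (Real.exp (-wj * x) * gj (x, v)) = gj (x, v) := by
    rw [← mul_assoc, ← Real.exp_add, show wj * x + -wj * x = 0 by ring, Real.exp_zero, one_mul]
  calc gj (x, v) = Real.exp (wj * x) * φ x := h4.symm
    _ = Real.exp (wj * x) * φ 1 := by rw [hconst]
    _ = Real.exp (wj * x) * (Real.exp (-wj) * gj (1, v)) := by
        simp only [hφ, mul_one]




set_option maxHeartbeats 2000000 in

/-- Let `V ⊆ ℝ^d` be open, `K ⊆ V` compact, `w₁, …, w_s ∈ ℝ`, and let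
`g_i : ℝ × V → ℝ` be smooth functions satisfying `∂g_i/∂x₁ = w_i g_i` and `g_i > 0` on
`(0,∞) × V`.  Then every iterated partial derivative of positive order of `log (Σ g_i)` is
bounded on `(0,∞) × K`. -/
theorem stmt_5 (d s : ℕ) (V : Set (Fin d → ℝ)) (hV : IsOpen V)
    (K : Set (Fin d → ℝ)) (hK : IsCompact K) (hKV : K ⊆ V)
    (w : Fin s → ℝ) (g : Fin s → (ℝ × (Fin d → ℝ)) → ℝ)
    (hg : ∀ i, ContDiffOn ℝ (⊤ : ℕ∞) (g i) ((univ : Set ℝ) ×ˢ V))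
    (hgw : ∀ i, ∀ p ∈ (Ioi (0:ℝ)) ×ˢ V, fderiv ℝ (g i) p (1, 0) = w i * g i p)
    (hgpos : ∀ i, ∀ p ∈ (Ioi (0:ℝ)) ×ˢ V, 0 < g i p) :
    ∀ m : ℕ, 1 ≤ m → ∃ C : ℝ, ∀ p ∈ (Ioi (0:ℝ)) ×ˢ K,
      ‖iteratedFDeriv ℝ m (fun q => Real.log (∑ i, g i q)) p‖ ≤ C := by
  intro m hm
  -- trivial case : K empty
  rcases K.eq_empty_or_nonempty with hKe | hKne
  · exact ⟨0, fun p hp => absurd hp.2 (by simp [hKe])⟩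
  -- trivial case : s = 0
  rcases Nat.eq_zero_or_pos s with hs0 | hs1
  · subst hs0
    refine ⟨0, fun p _ => ?_⟩
    have : (fun q : ℝ × (Fin d → ℝ) => Real.log (∑ i : Fin 0, g i q)) = fun _ => (0:ℝ) := by
      funext q; simp
    rw [this, iteratedFDeriv_const_of_ne (by omega)]
    simp
  have : Nonempty (Fin s) := ⟨⟨0, hs1⟩⟩
  classical
  obtain ⟨j₀, hj₀⟩ := Finite.exists_max w
  set w₀ := w j₀ with hw₀
  set h : Fin s → (Fin d → ℝ) → ℝ := fun j v => Real.exp (-(w j)) * g j (1, v) with hh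
  set b : Fin s → ℝ := fun j => w j - w₀ with hbdef
  have hb : ∀ j, b j ≤ 0 := fun j => sub_nonpos.mpr (hj₀ j)
  have hbj₀ : b j₀ = 0 := sub_self _
  -- positivity of h
  have hhpos : ∀ j, ∀ v ∈ V, 0 < h j v := by
    intro j v hv
    refine mul_pos (Real.exp_pos _) (hgpos j (1, v) ?_)
    constructor
    · exact mem_Ioi.mpr one_pos
    · exact hv
  -- smoothness of h
  have hcurve : ContDiff ℝ (⊤ : ℕ∞) (fun v : (Fin d → ℝ) => ((1:ℝ), v)) := contDiff_const.prodMk contDiff_id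
  have hhsmooth : ∀ j, ContDiffOn ℝ (⊤ : ℕ∞) (h j) V := by
    intro j
    apply ContDiffOn.mul contDiffOn_const
    refine (hg j).comp hcurve.contDiffOn ?_
    intro v hv
    constructor
    · exact mem_univ _
    · exact hv
  -- decomposition
  have key : ∀ j, ∀ x : ℝ, 0 < x → ∀ v ∈ V, g j (x, v) = Real.exp (w j * x) * h j v :=
    fun j x hx v hv => ode_decomp hV (hg j) (hgw j) hx hv
  -- the renormalized sum S
  set U : Set (ℝ × (Fin d → ℝ)) := ⇑(ContinuousLinearMap.snd ℝ ℝ (Fin d → ℝ)) ⁻¹' V with hUdef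
  have hU : IsOpen U := hV.preimage (ContinuousLinearMap.snd ℝ ℝ (Fin d → ℝ)).continuous
  have hUu : UniqueDiffOn ℝ U := hU.uniqueDiffOn
  have hUmem : ∀ q : ℝ × (Fin d → ℝ), q ∈ U ↔ q.2 ∈ V := fun q => Iff.rfl
  set P : Fin s → (ℝ × (Fin d → ℝ)) → ℝ := fun j q => Real.exp (b j * q.1) * h j q.2 with hPdef
  set S : (ℝ × (Fin d → ℝ)) → ℝ := fun q => ∑ j, P j q with hSdef
  have hexpcd : ∀ j, ContDiff ℝ (⊤ : ℕ∞) (fun q : ℝ × (Fin d → ℝ) => Real.exp (b j * q.1)) := by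
    intro j
    exact Real.contDiff_exp.comp (contDiff_const.mul contDiff_fst)
  have hhcomp : ∀ j, ContDiffOn ℝ (⊤ : ℕ∞) (fun q : ℝ × (Fin d → ℝ) => h j q.2) U := by
    intro j
    exact (hhsmooth j).comp contDiff_snd.contDiffOn (fun q hq => hq)
  have hPcd : ∀ j, ContDiffOn ℝ (⊤ : ℕ∞) (P j) U := fun j =>
    ((hexpcd j).contDiffOn).mul (hhcomp j)
  have hScd : ContDiffOn ℝ (⊤ : ℕ∞) S U := ContDiffOn.sum (fun j _ => hPcd j)
  have hSpos : ∀ q ∈ U, 0 < S q := by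
    intro q hq
    apply Finset.sum_pos (fun j _ => mul_pos (Real.exp_pos _) (hhpos j q.2 hq))
    exact Finset.univ_nonempty
  -- lower bound δ and upper bound M₀ for S on (0,∞) × K
  obtain ⟨v₀, hv₀K, hδmin'⟩ := hK.exists_isMinOn hKne (((hhsmooth j₀).continuousOn).mono hKV)
  have hδmin : ∀ v ∈ K, h j₀ v₀ ≤ h j₀ v := fun v hv => hδmin' hv
  set δ : ℝ := h j₀ v₀ with hδdef
  have hδpos : 0 < δ := hhpos j₀ v₀ (hKV hv₀K)
  have hMub : ∀ j : Fin s, ∃ Mj : ℝ, ∀ v ∈ K, h j v ≤ Mj := by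
    intro j
    obtain ⟨vj, _, hvj⟩ := hK.exists_isMaxOn hKne (((hhsmooth j).continuousOn).mono hKV)
    exact ⟨h j vj, fun v hv => hvj hv⟩
  choose M' hM' using hMub
  set M₀ : ℝ := ∑ j, M' j with hM₀def
  have hexple1 : ∀ (j : Fin s) (t : ℝ), 0 ≤ t → Real.exp (b j * t) ≤ 1 := by
    intro j t ht
    exact Real.exp_le_one_iff.mpr (mul_nonpos_of_nonpos_of_nonneg (hb j) ht)
  have hSl : ∀ q : ℝ × (Fin d → ℝ), 0 < q.1 → q.2 ∈ K → δ ≤ S q := by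
    intro q hq1 hq2
    have h1 : δ ≤ P j₀ q := by
      have : P j₀ q = h j₀ q.2 := by
        simp only [hPdef, hbj₀, zero_mul, Real.exp_zero, one_mul]
      rw [this]
      exact hδmin q.2 hq2
    refine le_trans h1 (Finset.single_le_sum (f := fun j => P j q) ?_ (Finset.mem_univ j₀))
    intro j _
    exact le_of_lt (mul_pos (Real.exp_pos _) (hhpos j q.2 (hKV hq2)))
  have hSu : ∀ q : ℝ × (Fin d → ℝ), 0 < q.1 → q.2 ∈ K → S q ≤ M₀ := by
    intro q hq1 hq2
    apply Finset.sum_le_sum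
    intro j _
    calc P j q ≤ 1 * h j q.2 := by
          apply mul_le_mul (hexple1 j q.1 (le_of_lt hq1)) (le_refl _)
            (le_of_lt (hhpos j q.2 (hKV hq2))) zero_le_one
      _ = h j q.2 := one_mul _
      _ ≤ M' j := hM' j q.2 hq2
  -- the identity  log (∑ g) = w₀ * x + log (S)  on (0,∞) × V
  have hident : EqOn (fun q : ℝ × (Fin d → ℝ) => Real.log (∑ i, g i q))
      (fun q => w₀ * q.1 + Real.log (S q)) ((Ioi (0:ℝ)) ×ˢ V) := by
    intro q hq
    obtain ⟨hq1, hq2⟩ := hq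
    have hterm : ∀ j : Fin s, g j q = Real.exp (w₀ * q.1) * P j q := by
      intro j
      have h1 : P j q = Real.exp (b j * q.1) * h j q.2 := rfl
      rw [h1, ← mul_assoc, ← Real.exp_add]
      have h2 : w₀ * q.1 + b j * q.1 = w j * q.1 := by
        simp only [hbdef]; ring
      rw [h2]
      exact key j q.1 hq1 q.2 hq2
    have hsum : (∑ i, g i q) = Real.exp (w₀ * q.1) * S q :=
      calc (∑ i, g i q) = ∑ j, Real.exp (w₀ * q.1) * P j q :=
            Finset.sum_congr rfl (fun j _ => hterm j)
        _ = Real.exp (w₀ * q.1) * ∑ j, P j q := (Finset.mul_sum _ _ _).symm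
        _ = Real.exp (w₀ * q.1) * S q := rfl
    show Real.log (∑ i, g i q) = w₀ * q.1 + Real.log (S q)
    rw [hsum, Real.log_mul (Real.exp_ne_zero _) (ne_of_gt (hSpos q hq2)), Real.log_exp]
  -- bounds for the derivatives of S
  set A : ℝ := (∑ j, |b j|) + 1 with hAdef
  have hA1 : (1:ℝ) ≤ A := by
    have : (0:ℝ) ≤ ∑ j, |b j| := Finset.sum_nonneg fun j _ => abs_nonneg _
    simp only [hAdef]; linarith
  have hAb : ∀ j, |b j| ≤ A := by
    intro j
    have h1 : |b j| ≤ ∑ j', |b j'| :=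
      Finset.single_le_sum (f := fun j' => |b j'|) (fun j' _ => abs_nonneg _) (Finset.mem_univ j)
    simp only [hAdef]; linarith
  have hexp_bound : ∀ (j : Fin s) (k : ℕ) (p : ℝ × (Fin d → ℝ)), 0 ≤ p.1 →
      ‖iteratedFDeriv ℝ k (fun q : ℝ × (Fin d → ℝ) => Real.exp (b j * q.1)) p‖ ≤ A ^ k := by
    intro j k p hp
    refine le_trans (exp_comp_fst_norm_le (b j) (hb j) k p hp) ?_
    exact pow_le_pow_left₀ (abs_nonneg _) (hAb j) k
  -- bounds for derivatives of h on K
  have hHex : ∀ (j : Fin s) (l : ℕ), ∃ Cjl : ℝ, ∀ v ∈ K,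
      ‖iteratedFDerivWithin ℝ l (h j) V v‖ ≤ Cjl := by
    intro j l
    apply hK.exists_bound_of_continuousOn
    exact ((hhsmooth j).continuousOn_iteratedFDerivWithin (by exact_mod_cast le_top) hV.uniqueDiffOn).mono hKV
  choose H hH using hHex
  -- translate to bounds for the snd-composition on U
  have hsndcomp : ∀ (j : Fin s) (l : ℕ) (p : ℝ × (Fin d → ℝ)), p ∈ U →
      ‖iteratedFDerivWithin ℝ l (fun q : ℝ × (Fin d → ℝ) => h j q.2) U p‖ ≤
        ‖iteratedFDerivWithin ℝ l (h j) V p.2‖ := by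
    intro j l p hp
    have hco : (fun q : ℝ × (Fin d → ℝ) => h j q.2) =
        (h j) ∘ ⇑(ContinuousLinearMap.snd ℝ ℝ (Fin d → ℝ)) := rfl
    rw [hco, ContinuousLinearMap.iteratedFDerivWithin_comp_right _ (hhsmooth j)
      hV.uniqueDiffOn (hUdef ▸ hUu) hp (by exact_mod_cast le_top)]
    refine le_trans (ContinuousMultilinearMap.norm_compContinuousLinearMap_le _ _) ?_
    calc ‖iteratedFDerivWithin ℝ l (h j) V p.2‖ * ∏ _i : Fin l, ‖ContinuousLinearMap.snd ℝ ℝ (Fin d → ℝ)‖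
        ≤ ‖iteratedFDerivWithin ℝ l (h j) V p.2‖ * 1 := by
          apply mul_le_mul_of_nonneg_left _ (norm_nonneg _)
          exact Finset.prod_le_one (fun _ _ => norm_nonneg _)
            (fun _ _ => ContinuousLinearMap.norm_snd_le _ _ _)
      _ = _ := mul_one _
  -- per-order bounds for the derivatives of S on (0,∞) × K
  have hSder : ∀ i : ℕ, ∃ Ci : ℝ, ∀ p ∈ (Ioi (0:ℝ)) ×ˢ K,
      ‖iteratedFDerivWithin ℝ i S U p‖ ≤ Ci := by
    intro i
    refine ⟨∑ j, ∑ k ∈ Finset.range (i+1),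
      (i.choose k : ℝ) * A ^ k * max (H j (i-k)) 0, ?_⟩
    intro p hp
    have hp1 : 0 < p.1 := hp.1
    have hpU : p ∈ U := hKV hp.2
    have hsum : iteratedFDerivWithin ℝ i S U p = ∑ j, iteratedFDerivWithin ℝ i (P j) U p := by
      rw [hSdef, ← Finset.sum_fn]
      exact iteratedFDerivWithin_sum_apply hUu hpU (fun j _ => (hPcd j p hpU).of_le (by exact_mod_cast le_top))
    rw [hsum]
    refine le_trans (norm_sum_le _ _) (Finset.sum_le_sum fun j _ => ?_)
    have hmul := norm_iteratedFDerivWithin_mul_le (𝕜 := ℝ)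
      (f := fun q : ℝ × (Fin d → ℝ) => Real.exp (b j * q.1))
      (g := fun q : ℝ × (Fin d → ℝ) => h j q.2)
      ((hexpcd j).contDiffOn) (hhcomp j) hUu hpU (n := i) (by exact_mod_cast le_top)
    refine le_trans hmul (Finset.sum_le_sum fun k hk => ?_)
    have hf1 : ‖iteratedFDerivWithin ℝ k (fun q : ℝ × (Fin d → ℝ) => Real.exp (b j * q.1)) U p‖
        ≤ A ^ k := by
      rw [iteratedFDerivWithin_of_isOpen _ hU hpU]
      exact hexp_bound j k p (le_of_lt hp1)
    have hf2 : ‖iteratedFDerivWithin ℝ (i-k) (fun q : ℝ × (Fin d → ℝ) => h j q.2) U p‖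
        ≤ max (H j (i-k)) 0 := by
      refine le_trans (hsndcomp j (i-k) p hpU) (le_trans (hH j (i-k) p.2 hp.2) (le_max_left _ _))
    exact mul_le_mul (mul_le_mul_of_nonneg_left hf1 (by positivity)) hf2
      (norm_nonneg _) (by positivity)
  choose Cs hCs using hSder
  set D : ℝ := 1 + ∑ i ∈ Finset.range (m+1), max (Cs i) 0 with hDdef
  have hD1 : (1:ℝ) ≤ D := by
    have : (0:ℝ) ≤ ∑ i ∈ Finset.range (m+1), max (Cs i) 0 :=
      Finset.sum_nonneg fun i _ => le_max_right _ _
    simp only [hDdef]; linarith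
  have hDb : ∀ i : ℕ, 1 ≤ i → i ≤ m → ∀ p ∈ (Ioi (0:ℝ)) ×ˢ K,
      ‖iteratedFDerivWithin ℝ i S U p‖ ≤ D ^ i := by
    intro i h1 h2 p hp
    have hle : max (Cs i) 0 ≤ ∑ i' ∈ Finset.range (m+1), max (Cs i') 0 :=
      Finset.single_le_sum (f := fun i' => max (Cs i') 0)
        (fun i' _ => le_max_right _ _) (Finset.mem_range.mpr (by omega))
    calc ‖iteratedFDerivWithin ℝ i S U p‖ ≤ Cs i := hCs i p hp
      _ ≤ D := by simp only [hDdef]; have := le_max_left (Cs i) 0; linarith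
      _ ≤ D ^ i := le_self_pow₀ hD1 (by omega)
  -- bound for the derivatives of log at S p
  set Clog : ℝ := |Real.log δ| + |Real.log M₀| + m.factorial * (max 1 δ⁻¹)^m with hClogdef
  have hClog : ∀ p ∈ (Ioi (0:ℝ)) ×ˢ K, ∀ i : ℕ, i ≤ m →
      ‖iteratedFDerivWithin ℝ i Real.log (Ioi 0) (S p)‖ ≤ Clog := by
    intro p hp i hi
    have hSδ : δ ≤ S p := hSl p hp.1 hp.2
    have hSp : S p ∈ Ioi (0:ℝ) := lt_of_lt_of_le hδpos hSδ
    rw [iteratedFDerivWithin_of_isOpen _ isOpen_Ioi hSp,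
      norm_iteratedFDeriv_eq_norm_iteratedDeriv]
    have hmax0 : (0:ℝ) ≤ max 1 δ⁻¹ := le_trans zero_le_one (le_max_left _ _)
    have hfact : (0:ℝ) ≤ m.factorial * (max 1 δ⁻¹)^m :=
      mul_nonneg (Nat.cast_nonneg _) (pow_nonneg hmax0 m)
    cases i with
    | zero =>
      rw [iteratedDeriv_zero, Real.norm_eq_abs]
      have hub : Real.log (S p) ≤ |Real.log M₀| :=
        le_trans (Real.log_le_log hSp (hSu p hp.1 hp.2)) (le_abs_self _)
      have hlb : -|Real.log δ| ≤ Real.log (S p) := by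
        have h1 := Real.log_le_log hδpos hSδ
        have h2 := neg_abs_le (Real.log δ)
        linarith
      have ha1 := abs_nonneg (Real.log δ)
      have ha2 := abs_nonneg (Real.log M₀)
      rw [abs_le]
      constructor <;> simp only [hClogdef] <;> linarith
    | succ n =>
      rw [log_iteratedDeriv_norm n hSp]
      have hSppos : (0:ℝ) < S p := lt_of_lt_of_le hδpos hSδ
      have h1 : (S p)⁻¹ ≤ δ⁻¹ := inv_anti₀ hδpos hSδ
      have h2 : ((S p)⁻¹)^(n+1) ≤ (max 1 δ⁻¹)^(n+1) :=
        pow_le_pow_left₀ (inv_nonneg.mpr (le_of_lt hSppos)) (le_trans h1 (le_max_right _ _)) _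
      have h3 : (max 1 δ⁻¹)^(n+1) ≤ (max 1 δ⁻¹)^m :=
        pow_le_pow_right₀ (le_max_left _ _) hi
      have h4 : (n.factorial : ℝ) ≤ (m.factorial : ℝ) :=
        Nat.cast_le.mpr (Nat.factorial_le (by omega))
      have h5 : (n.factorial : ℝ) * ((S p)⁻¹)^(n+1) ≤ m.factorial * (max 1 δ⁻¹)^m :=
        mul_le_mul h4 (h2.trans h3) (pow_nonneg (inv_nonneg.mpr (le_of_lt hSppos)) _)
          (Nat.cast_nonneg _)
      have ha1 := abs_nonneg (Real.log δ)
      have ha2 := abs_nonneg (Real.log M₀)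
      simp only [hClogdef]; linarith
  -- assembly
  set ℓ : (ℝ × (Fin d → ℝ)) →L[ℝ] ℝ := w₀ • ContinuousLinearMap.fst ℝ ℝ (Fin d → ℝ) with hℓ
  have hℓfun : (fun q : ℝ × (Fin d → ℝ) => w₀ * q.1) = ⇑ℓ := by
    funext q
    simp [hℓ]
  refine ⟨‖ℓ‖ + m.factorial * Clog * D ^ m, ?_⟩
  intro p hp
  have hp1 : 0 < p.1 := hp.1
  have hpK : p.2 ∈ K := hp.2
  have hpV : p.2 ∈ V := hKV hpK
  have hpU : p ∈ U := hpV
  have hpW : p ∈ (Ioi (0:ℝ)) ×ˢ V := ⟨hp1, hpV⟩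
  have hWopen : IsOpen ((Ioi (0:ℝ)) ×ˢ V) := isOpen_Ioi.prod hV
  have e1 : iteratedFDeriv ℝ m (fun q => Real.log (∑ i, g i q)) p
      = iteratedFDeriv ℝ m (fun q => w₀ * q.1 + Real.log (S q)) p := by
    rw [← iteratedFDerivWithin_of_isOpen m hWopen hpW,
      ← iteratedFDerivWithin_of_isOpen (f := fun q => w₀ * q.1 + Real.log (S q)) m hWopen hpW]
    exact iteratedFDerivWithin_congr hident hpW m
  have hℓcd : ContDiffOn ℝ (m : WithTop ℕ∞) (fun q : ℝ × (Fin d → ℝ) => w₀ * q.1) U := by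
    rw [hℓfun]; exact ℓ.contDiff.contDiffOn
  have hlogScd : ContDiffOn ℝ (⊤ : ℕ∞) (fun q : ℝ × (Fin d → ℝ) => Real.log (S q)) U := by
    have : ContDiffOn ℝ (⊤ : ℕ∞) (Real.log ∘ S) U := by
      refine (Real.contDiffOn_log).comp hScd ?_
      intro q hq
      exact ne_of_gt (hSpos q hq)
    exact this
  have e3 : iteratedFDerivWithin ℝ m (fun q => w₀ * q.1 + Real.log (S q)) U p
      = iteratedFDerivWithin ℝ m (fun q : ℝ × (Fin d → ℝ) => w₀ * q.1) U p
        + iteratedFDerivWithin ℝ m (fun q : ℝ × (Fin d → ℝ) => Real.log (S q)) U p :=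
    iteratedFDerivWithin_add_apply' (hℓcd p hpU) ((hlogScd p hpU).of_le (by exact_mod_cast le_top)) hUu hpU
  rw [e1, ← iteratedFDerivWithin_of_isOpen (f := fun q => w₀ * q.1 + Real.log (S q)) m hU hpU, e3]
  refine le_trans (norm_add_le _ _) (add_le_add ?_ ?_)
  · rw [iteratedFDerivWithin_of_isOpen m hU hpU, hℓfun]
    exact clm_iteratedFDeriv_norm_le ℓ hm p
  · have hcomp := norm_iteratedFDerivWithin_comp_le (𝕜 := ℝ) (g := Real.log) (f := S) (n := m)
      (Real.contDiffOn_log.mono (fun y hy => ne_of_gt hy)) hScd (by exact_mod_cast le_top)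
      (isOpen_Ioi.uniqueDiffOn) hUu (fun q hq => hSpos q hq) hpU
      (fun i hi => hClog p hp i hi) (fun i h1 h2 => hDb i h1 h2 p hp)
    exact le_trans (le_of_eq (by rfl)) hcomp
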